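/- arXiv:2510.21650 — 2 statements merged into one kernel-verified Lean document; each statement's English description precedes it below -/
import Mathlib

section
/- (Proposition: terminal comparison at the final deadline T_K.) Let u : 𝒮̄ → ℝ be upper semicontinuous such that for every x ∈ 𝒮: u(x) ≤ w_K·[G_K − x₀ − (x₁ − C(−x₁))⁺]⁺ and u(x) ≤ M[u]^*(x). Let v : 𝒮̄ → ℝ be lower semicontinuous such that for every x ∈ 𝒮: v(x) ≥ w_K·[G_K − x₀ − (x₁ − C(−x₁))⁺]⁺ or v(x) ≥ M[v]_*(x). Assume u((0,0)) ≤ v((0,0)), v((0,0)) = w_K G_K, and for all x ∈ 𝒮̄: 0 ≤ u(x) ≤ w_K G_K and −c(1 + |x|^{p₀}) ≤ v(x) ≤ w_K G_K. Then u(x) ≤ v(x) for all x ∈ 𝒮̄. -/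
open Set Filter

/-- The closed positive quadrant of portfolio positions. -/
def Sbar : Set (ℝ × ℝ) := Set.Ici 0 ×ˢ Set.Ici 0

/-- The positive quadrant without the origin. -/
def Sset : Set (ℝ × ℝ) := Sbar \ {(0, 0)}

/-- A transaction cost function. -/
def IsCostFn (C : ℝ → ℝ) : Prop :=
  Continuous C ∧ (∀ d₁ d₂ : ℝ, |d₁| ≤ |d₂| → C d₁ ≤ C d₂) ∧ 0 < C 0 ∧
    StrictMono (fun d => d + C d) ∧ Set.Ici (0 : ℝ) ⊆ Set.range (fun d => d + C d)

/-- The rebalancing map. -/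
def Gam (C : ℝ → ℝ) (x : ℝ × ℝ) (d : ℝ) : ℝ × ℝ := (x.1 - d - C d, x.2 + d)

/-- The set of feasible transactions. -/
def Dset (C : ℝ → ℝ) (x : ℝ × ℝ) : Set ℝ := {d | Gam C x d ∈ Sbar}

/-- The intervention operator, with value `+∞` if no transaction is feasible. -/
noncomputable def Mop (C : ℝ → ℝ) (g : ℝ × ℝ → ℝ) (x : ℝ × ℝ) : EReal :=
  ⨅ d ∈ Dset C x, ((g (Gam C x d) : ℝ) : EReal)

/-- Upper semicontinuous envelope of `h` computed on `E`. -/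
noncomputable def uscEnv {α : Type*} [TopologicalSpace α]
    (h : α → EReal) (E : Set α) (z : α) : EReal :=
  Filter.limsup h (nhdsWithin z E)

/-- Lower semicontinuous envelope of `h` computed on `E`. -/
noncomputable def lscEnv {α : Type*} [TopologicalSpace α]
    (h : α → EReal) (E : Set α) (z : α) : EReal :=
  Filter.liminf h (nhdsWithin z E)

/-- Euclidean norm on `ℝ²`. -/
noncomputable def eunorm (p : ℝ × ℝ) : ℝ := Real.sqrt (p.1 ^ 2 + p.2 ^ 2)

/-!
Induction on the total wealth `x.1 + x.2`, which every transaction lowers by at least `C 0`.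
At a point of `Sset` where `v` does not dominate the terminal payoff, lower semicontinuity of `v`
and compactness of the feasible transactions give a `d` with `v (Gam C x d) ≤ v x`. Upper
semicontinuity of `u` lets the inequality `u x ≤ (M u)^* x` pass from strictly feasible
transactions to all feasible ones, so `u x ≤ u (Gam C x d) ≤ v (Gam C x d)` by induction. This fails
only when liquidating the risky position costs exactly the whole wealth; then the only feasible
transaction leads to `(0, 0)`, where `v = wK * GK ≥ u`.
-/

open Topology

lemma isClosed_Sbar : IsClosed Sbar := isClosed_Ici.prod isClosed_Ici

lemma mem_Sbar {p : ℝ × ℝ} : p ∈ Sbar ↔ 0 ≤ p.1 ∧ 0 ≤ p.2 := Iff.rfl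

lemma mem_Dset {C : ℝ → ℝ} {x : ℝ × ℝ} {d : ℝ} :
    d ∈ Dset C x ↔ 0 ≤ x.1 - d - C d ∧ 0 ≤ x.2 + d := Iff.rfl

lemma Gam_fst_add_snd (C : ℝ → ℝ) (x : ℝ × ℝ) (d : ℝ) :
    (Gam C x d).1 + (Gam C x d).2 = x.1 + x.2 - C d := by
  simp only [Gam]; ring

lemma continuous_Gam {C : ℝ → ℝ} (hC : Continuous C) :
    Continuous fun p : (ℝ × ℝ) × ℝ => Gam C p.1 p.2 := by
  unfold Gam; fun_prop

lemma continuous_Gam_left (C : ℝ → ℝ) (d : ℝ) : Continuous fun x => Gam C x d := by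
  unfold Gam; fun_prop

lemma continuous_Gam_right {C : ℝ → ℝ} (hC : Continuous C) (x : ℝ × ℝ) :
    Continuous (Gam C x) := by
  unfold Gam; fun_prop

lemma Mop_le_of_mem_Dset {C : ℝ → ℝ} {g : ℝ × ℝ → ℝ} {x : ℝ × ℝ} {d : ℝ}
    (hd : d ∈ Dset C x) : Mop C g x ≤ g (Gam C x d) :=
  iInf₂_le d hd

lemma Mop_lt_coe_iff {C : ℝ → ℝ} {g : ℝ × ℝ → ℝ} {x : ℝ × ℝ} {a : ℝ} :
    Mop C g x < a ↔ ∃ d ∈ Dset C x, g (Gam C x d) < a := by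
  simp only [Mop, iInf_lt_iff, EReal.coe_lt_coe_iff, exists_prop]

namespace IsCostFn

variable {C : ℝ → ℝ}

lemma apply_zero_le (hC : IsCostFn C) (d : ℝ) : C 0 ≤ C d :=
  hC.2.1 0 d (by simp)

lemma Dset_subset_Icc (hC : IsCostFn C) (x : ℝ × ℝ) : Dset C x ⊆ Icc (-x.2) x.1 := by
  intro d hd
  have := hC.apply_zero_le d
  have := hC.2.2.1
  rw [mem_Dset] at hd
  constructor <;> linarith

lemma exists_Dset_eq_Icc (hC : IsCostFn C) {x : ℝ × ℝ} (hx : 0 ≤ x.1) :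
    ∃ b, b + C b = x.1 ∧ Dset C x = Icc (-x.2) b := by
  obtain ⟨b, hb⟩ := hC.2.2.2.2 (mem_Ici.mpr hx)
  dsimp only at hb
  refine ⟨b, hb, Set.ext fun d => ?_⟩
  have hle : d + C d ≤ x.1 ↔ d ≤ b := hb ▸ hC.2.2.2.1.le_iff_le
  rw [mem_Dset, mem_Icc]
  constructor
  · rintro ⟨h1, h2⟩
    exact ⟨by linarith, hle.mp (by linarith)⟩
  · rintro ⟨h1, h2⟩
    exact ⟨by linarith [hle.mpr h2], by linarith⟩

lemma Gam_eq_zero_of_le (hC : IsCostFn C) {x : ℝ × ℝ} {d : ℝ} (hd : d ∈ Dset C x)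
    (hdeg : x.1 ≤ -x.2 + C (-x.2)) : Gam C x d = (0, 0) := by
  rw [mem_Dset] at hd
  have hmono : -x.2 + C (-x.2) ≤ d + C d := hC.2.2.2.1.monotone (by linarith)
  have hd_eq : d = -x.2 := hC.2.2.2.1.injective (show d + C d = -x.2 + C (-x.2) by linarith)
  subst hd_eq
  simp only [Gam, Prod.mk.injEq]
  constructor <;> linarith

end IsCostFn

lemma UpperSemicontinuousWithinAt.ge_of_mem_closure {α β : Type*} [TopologicalSpace α]
    [LinearOrder β] {f : α → β} {s : Set α} {x : α} {c : β}
    (hf : UpperSemicontinuousWithinAt f s x) (hx : x ∈ closure s) (h : ∀ y ∈ s, c ≤ f y) :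
    c ≤ f x := by
  by_contra! hlt
  have := mem_closure_iff_nhdsWithin_neBot.mp hx
  obtain ⟨y, hfy, hy⟩ := ((hf c hlt).and self_mem_nhdsWithin).exists
  exact (h y hy).not_gt hfy

lemma le_Gam_of_le_uscEnv_Mop_of_pos {C : ℝ → ℝ} {u : ℝ × ℝ → ℝ}
    (hu : UpperSemicontinuousOn u Sbar) {x : ℝ × ℝ}
    (hux : (u x : EReal) ≤ uscEnv (Mop C u) Sbar x) {d : ℝ}
    (hd : Gam C x d ∈ Ioi 0 ×ˢ Ioi 0) : u x ≤ u (Gam C x d) := by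
  set g := fun y => Gam C y d
  have hgx : g x ∈ Sbar := prod_mono Ioi_subset_Ici_self Ioi_subset_Ici_self hd
  have hg_mem : ∀ᶠ y in 𝓝[Sbar] x, g y ∈ Sbar :=
    (((continuous_Gam_left C d).tendsto x).eventually
      ((isOpen_Ioi.prod isOpen_Ioi).mem_nhds hd)).filter_mono nhdsWithin_le_nhds |>.mono
      fun y hy => prod_mono Ioi_subset_Ici_self Ioi_subset_Ici_self hy
  have hg_tendsto : Tendsto g (𝓝[Sbar] x) (𝓝[Sbar] (g x)) :=
    tendsto_nhdsWithin_iff.mpr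
      ⟨((continuous_Gam_left C d).tendsto x).mono_left nhdsWithin_le_nhds, hg_mem⟩
  have hu' : UpperSemicontinuousOn (fun z => (u z : EReal)) Sbar :=
    continuous_coe_real_ereal.comp_upperSemicontinuousOn hu EReal.coe_strictMono.monotone
  suffices (u x : EReal) ≤ u (g x) by exact_mod_cast this
  calc (u x : EReal) ≤ limsup (Mop C u) (𝓝[Sbar] x) := hux
    _ ≤ limsup ((fun z => (u z : EReal)) ∘ g) (𝓝[Sbar] x) :=
        limsup_le_limsup (hg_mem.mono fun y hy => Mop_le_of_mem_Dset hy)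
    _ ≤ limsup (fun z => (u z : EReal)) (𝓝[Sbar] (g x)) := hg_tendsto.limsup_comp_le_limsup
    _ ≤ u (g x) := upperSemicontinuousWithinAt_iff_limsup_le.mp (hu' (g x) hgx)

lemma le_Gam_of_le_uscEnv_Mop {C : ℝ → ℝ} (hC : IsCostFn C) {u : ℝ × ℝ → ℝ}
    (hu : UpperSemicontinuousOn u Sbar) {x : ℝ × ℝ} (hx : x ∈ Sbar)
    (hux : (u x : EReal) ≤ uscEnv (Mop C u) Sbar x) (hnd : -x.2 + C (-x.2) < x.1) {d : ℝ}
    (hd : d ∈ Dset C x) : u x ≤ u (Gam C x d) := by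
  obtain ⟨b, hb, hD⟩ := hC.exists_Dset_eq_Icc hx.1
  have hlt : -x.2 < b := hC.2.2.2.1.lt_iff_lt.mp (hb ▸ hnd)
  rw [hD, ← closure_Ioo hlt.ne] at hd
  have husc : UpperSemicontinuousOn (u ∘ Gam C x) (closure (Ioo (-x.2) b)) :=
    hu.comp (continuous_Gam_right hC.1 x).continuousOn
      (by rw [closure_Ioo hlt.ne, ← hD]; exact fun _ h => h)
  refine UpperSemicontinuousWithinAt.ge_of_mem_closure (f := u ∘ Gam C x)
    ((husc d hd).mono subset_closure) hd fun d' ⟨hd'1, hd'2⟩ => ?_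
  apply le_Gam_of_le_uscEnv_Mop_of_pos hu hux
  have : d' + C d' < x.1 := hb ▸ hC.2.2.2.1 hd'2
  exact ⟨show 0 < x.1 - d' - C d' by linarith, show 0 < x.2 + d' by linarith⟩

lemma exists_Gam_le_of_lscEnv_Mop_lt {C : ℝ → ℝ} (hC : IsCostFn C) {v : ℝ × ℝ → ℝ}
    (hv : LowerSemicontinuousOn v Sbar) {x : ℝ × ℝ} {a : ℝ}
    (ha : lscEnv (Mop C v) Sbar x < a) : ∃ d ∈ Dset C x, v (Gam C x d) ≤ a := by
  set r := x.1 + x.2 + 1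
  set P : Set ((ℝ × ℝ) × ℝ) :=
    ((Icc 0 r ×ˢ Icc 0 r) ×ˢ Icc (-r) r) ∩ {p | Gam C p.1 p.2 ∈ Sbar}
  set F := fun p : (ℝ × ℝ) × ℝ => v (Gam C p.1 p.2)
  have hP : IsCompact P := ((isCompact_Icc.prod isCompact_Icc).prod isCompact_Icc).inter_right
    (isClosed_Sbar.preimage (continuous_Gam hC.1))
  have hF : LowerSemicontinuousOn F P :=
    hv.comp (continuous_Gam hC.1).continuousOn fun _ hp => hp.2
  have hT : IsClosed (Prod.fst '' (P ∩ F ⁻¹' Iic a)) :=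
    ((hF.isCompact_inter_preimage_Iic hP a).image continuous_fst).isClosed
  have hnear : ∀ᶠ y in 𝓝[Sbar] x, y ∈ Sbar ∧ y.1 + y.2 < r :=
    eventually_mem_nhdsWithin.and <| nhdsWithin_le_nhds <|
      (continuous_fst.add continuous_snd).continuousAt.eventually
        (eventually_lt_nhds (lt_add_one _))
  have hfreq : ∃ᶠ y in 𝓝[Sbar] x, y ∈ Prod.fst '' (P ∩ F ⁻¹' Iic a) := by
    refine (frequently_lt_of_liminf_lt (h := ha)).and_eventually hnear |>.mono ?_
    rintro y ⟨hy, hyS, hyr⟩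
    obtain ⟨d, hd, hlt⟩ := Mop_lt_coe_iff.mp hy
    obtain ⟨hy1, hy2⟩ := mem_Sbar.mp hyS
    obtain ⟨hd1, hd2⟩ := hC.Dset_subset_Icc y hd
    have hyd : (y, d) ∈ P :=
      ⟨⟨⟨⟨hy1, by linarith⟩, hy2, by linarith⟩, by linarith, by linarith⟩, hd⟩
    exact ⟨(y, d), ⟨hyd, hlt.le⟩, rfl⟩
  obtain ⟨⟨y, d⟩, ⟨⟨-, hd⟩, hFd⟩, rfl⟩ :=
    (hfreq.filter_mono nhdsWithin_le_nhds).mem_of_closed hT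
  exact ⟨d, hd, hFd⟩

lemma exists_Gam_le_of_lscEnv_Mop_le {C : ℝ → ℝ} (hC : IsCostFn C) {v : ℝ × ℝ → ℝ}
    (hv : LowerSemicontinuousOn v Sbar) {x : ℝ × ℝ} (hx : x ∈ Sbar)
    (hvx : lscEnv (Mop C v) Sbar x ≤ v x) : ∃ d ∈ Dset C x, v (Gam C x d) ≤ v x := by
  obtain ⟨b, -, hD⟩ := hC.exists_Dset_eq_Icc hx.1
  have hne : (Dset C x).Nonempty := by
    obtain ⟨d, hd, -⟩ := exists_Gam_le_of_lscEnv_Mop_lt hC hv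
      (hvx.trans_lt (EReal.coe_lt_coe_iff.mpr (lt_add_one (v x))))
    exact ⟨d, hd⟩
  have hF : LowerSemicontinuousOn (v ∘ Gam C x) (Dset C x) :=
    hv.comp (continuous_Gam_right hC.1 x).continuousOn fun _ h => h
  obtain ⟨d, hd, hmin⟩ := hF.exists_isMinOn hne (hD ▸ isCompact_Icc)
  refine ⟨d, hd, le_of_forall_gt_imp_ge_of_dense fun a ha => ?_⟩
  obtain ⟨d', hd', hle⟩ := exists_Gam_le_of_lscEnv_Mop_lt hC hv
    (hvx.trans_lt (EReal.coe_lt_coe_iff.mpr ha))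
  exact (hmin hd').trans hle

theorem forall_mem_of_descent {α : Type*} {s : Set α} {f : α → ℝ} (hf : ∀ x ∈ s, 0 ≤ f x)
    {δ : ℝ} (hδ : 0 < δ) {P : α → Prop}
    (h : ∀ x ∈ s, (∀ y ∈ s, f y ≤ f x - δ → P y) → P x) : ∀ x ∈ s, P x := by
  suffices ∀ n : ℕ, ∀ x ∈ s, f x < n * δ → P x by
    intro x hx
    obtain ⟨n, hn⟩ := exists_nat_gt (f x / δ)
    exact this n x hx ((div_lt_iff₀ hδ).mp hn)
  intro n
  induction n with
  | zero =>
    intro x hx hlt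
    rw [Nat.cast_zero, zero_mul] at hlt
    linarith [hf x hx]
  | succ n ih =>
    refine fun x hx hlt => h x hx fun y hy hle => ih y hy ?_
    push_cast at hlt
    linarith

theorem terminal_comparison_TK_general
    (C : ℝ → ℝ) (hC : IsCostFn C)
    (wK GK : ℝ)
    (u v : ℝ × ℝ → ℝ)
    (hu_usc : UpperSemicontinuousOn u Sbar)
    (hv_lsc : LowerSemicontinuousOn v Sbar)
    (hu_sub : ∀ x ∈ Sset,
      u x ≤ wK * max (GK - x.1 - max (x.2 - C (-x.2)) 0) 0 ∧
      (u x : EReal) ≤ uscEnv (Mop C u) Sbar x)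
    (hv_super : ∀ x ∈ Sset,
      wK * max (GK - x.1 - max (x.2 - C (-x.2)) 0) 0 ≤ v x ∨
      lscEnv (Mop C v) Sbar x ≤ (v x : EReal))
    (hu0 : u (0, 0) ≤ v (0, 0))
    (hv0 : v (0, 0) = wK * GK)
    (hu_bd : ∀ x ∈ Sbar, 0 ≤ u x ∧ u x ≤ wK * GK) :
    ∀ x ∈ Sbar, u x ≤ v x := by
  refine forall_mem_of_descent (f := fun x => x.1 + x.2) (fun x hx => add_nonneg hx.1 hx.2)
    hC.2.2.1 fun x hx ih => ?_
  rcases eq_or_ne x (0, 0) with rfl | hx0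
  · exact hu0
  obtain ⟨hu_term, hu_int⟩ := hu_sub x ⟨hx, hx0⟩
  rcases hv_super x ⟨hx, hx0⟩ with hv_term | hv_int
  · exact hu_term.trans hv_term
  obtain ⟨d, hd, hvd⟩ := exists_Gam_le_of_lscEnv_Mop_le hC hv_lsc hx hv_int
  rcases lt_or_ge (-x.2 + C (-x.2)) x.1 with hnd | hdeg
  · have hwealth : (Gam C x d).1 + (Gam C x d).2 ≤ x.1 + x.2 - C 0 := by
      rw [Gam_fst_add_snd]; linarith [hC.apply_zero_le d]
    calc u x ≤ u (Gam C x d) := le_Gam_of_le_uscEnv_Mop hC hu_usc hx hu_int hnd hd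
      _ ≤ v (Gam C x d) := ih _ hd hwealth
      _ ≤ v x := hvd
  · rw [hC.Gam_eq_zero_of_le hd hdeg, hv0] at hvd
    linarith [(hu_bd x hx).2]

/-- (Proposition: terminal comparison at the final deadline `T_K`.) -/
theorem terminal_comparison_TK
    (C : ℝ → ℝ) (hC : IsCostFn C)
    (wK GK : ℝ) (hw : 0 < wK) (hG : 0 < GK)
    (p₀ c : ℝ) (hp₀ : 0 < p₀) (hp₁ : p₀ < 1) (hc : 0 < c)
    (u v : ℝ × ℝ → ℝ)
    (hu_usc : UpperSemicontinuousOn u Sbar)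
    (hv_lsc : LowerSemicontinuousOn v Sbar)
    (hu_sub : ∀ x ∈ Sset,
      u x ≤ wK * max (GK - x.1 - max (x.2 - C (-x.2)) 0) 0 ∧
      (u x : EReal) ≤ uscEnv (Mop C u) Sbar x)
    (hv_super : ∀ x ∈ Sset,
      wK * max (GK - x.1 - max (x.2 - C (-x.2)) 0) 0 ≤ v x ∨
      lscEnv (Mop C v) Sbar x ≤ (v x : EReal))
    (hu0 : u (0, 0) ≤ v (0, 0))
    (hv0 : v (0, 0) = wK * GK)
    (hu_bd : ∀ x ∈ Sbar, 0 ≤ u x ∧ u x ≤ wK * GK)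
    (hv_bd : ∀ x ∈ Sbar, -(c * (1 + eunorm x ^ p₀)) ≤ v x ∧ v x ≤ wK * GK) :
    ∀ x ∈ Sbar, u x ≤ v x :=
  terminal_comparison_TK_general C hC wK GK u v hu_usc hv_lsc hu_sub hv_super hu0 hv0 hu_bd
end

section
/- (Characterization of the no-transaction region.) Let C be a transaction cost function. For every x = (x₀, x₁) ∈ 𝒮̄ the following are equivalent: (i) D(x) ≠ ∅; (ii) −x₁ ∈ D(x) (i.e. full liquidation of the stock position is feasible); (iii) x₀ + x₁ ≥ C(−x₁). Consequently, 𝒮_∅ = { x ∈ 𝒮̄ : x₀ + x₁ < C(−x₁) }. -/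
open Set Filter

/-- Positions with no feasible transactions. -/
def Sempty (C : ℝ → ℝ) : Set (ℝ × ℝ) := {x | x ∈ Sbar ∧ Dset C x = ∅}

lemma mem_Dset_iff (C : ℝ → ℝ) (x : ℝ × ℝ) (d : ℝ) :
    d ∈ Dset C x ↔ 0 ≤ x.1 - d - C d ∧ 0 ≤ x.2 + d := by
  simp [Dset, Gam, Sbar, Set.mem_prod, Prod.le_def]

/-- (Characterization of the no-transaction region.) -/
theorem no_transaction_region_characterization
    (C : ℝ → ℝ) (hC : IsCostFn C) :
    (∀ x ∈ Sbar,
      ((Dset C x).Nonempty ↔ -x.2 ∈ Dset C x) ∧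
      ((Dset C x).Nonempty ↔ C (-x.2) ≤ x.1 + x.2)) ∧
    Sempty C = {x | x ∈ Sbar ∧ x.1 + x.2 < C (-x.2)} := by
  obtain ⟨-, -, -, hmono, -⟩ := hC
  have key : ∀ x : ℝ × ℝ, x ∈ Sbar →
      (((Dset C x).Nonempty ↔ -x.2 ∈ Dset C x) ∧
      ((Dset C x).Nonempty ↔ C (-x.2) ≤ x.1 + x.2)) := by
    intro x hx
    have h3to2 : C (-x.2) ≤ x.1 + x.2 → -x.2 ∈ Dset C x := by
      intro h
      rw [mem_Dset_iff]
      constructor <;> linarith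
    have h1to3 : (Dset C x).Nonempty → C (-x.2) ≤ x.1 + x.2 := by
      rintro ⟨d, hd⟩
      rw [mem_Dset_iff] at hd
      have hle : -x.2 ≤ d := by linarith [hd.2]
      have := hmono.monotone hle
      linarith [hd.1]
    constructor
    · exact ⟨fun h => h3to2 (h1to3 h), fun h => ⟨-x.2, h⟩⟩
    · exact ⟨h1to3, fun h => ⟨-x.2, h3to2 h⟩⟩
  refine ⟨key, ?_⟩
  ext x
  simp only [Sempty, Set.mem_setOf_eq]
  constructor
  · rintro ⟨hx, hD⟩
    refine ⟨hx, ?_⟩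
    by_contra h
    push_neg at h
    have := ((key x hx).2).mpr h
    rw [hD] at this
    exact Set.not_nonempty_empty this
  · rintro ⟨hx, hlt⟩
    refine ⟨hx, ?_⟩
    by_contra h
    have hne : (Dset C x).Nonempty := Set.nonempty_iff_ne_empty.mpr h
    exact absurd ((key x hx).2.mp hne) (not_le.mpr hlt)
end
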